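/- Let b = [[1,0,1,0],[0,0,0,0],[0,0,0,0],[0,1,0,1]] (matrix b^(11)) and I the 2×2 identity, over ℂ(ξ_α,ξ_β,ξ_γ). With R_{βα} = −(I⊗I − ξ_α b)⁻¹(I⊗I − ξ_β b), the Yang–Baxter equation (R_{γβ}⊗I)(I⊗R_{γα})(R_{βα}⊗I) = (I⊗R_{βα})(R_{γα}⊗I)(I⊗R_{γβ}) holds. -/
import Mathlib


open Matrix

noncomputable section

/-- The field of rational functions in the three spectral parameters `ξ_α, ξ_β, ξ_γ`. -/
abbrev KK : Type := FractionRing (MvPolynomial (Fin 3) ℚ)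

/-- The spectral parameters `ξ 0 = ξ_α`, `ξ 1 = ξ_β`, `ξ 2 = ξ_γ` as elements of `KK`. -/
def xi (i : Fin 3) : KK := algebraMap (MvPolynomial (Fin 3) ℚ) KK (MvPolynomial.X i)

/-- Reindexing of a 4×4 matrix by pairs, lexicographically: 0↦11, 1↦12, 2↦21, 3↦22. -/
def toPairs (M : Matrix (Fin 4) (Fin 4) KK) :
    Matrix (Fin 2 × Fin 2) (Fin 2 × Fin 2) KK :=
  Matrix.reindex finProdFinEquiv.symm finProdFinEquiv.symm M

/-- The matrix `b^(11)` of Alimohammadi–Ahmadi. -/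
def bmat : Matrix (Fin 2 × Fin 2) (Fin 2 × Fin 2) KK :=
  toPairs !![1,0,1,0; 0,0,0,0; 0,0,0,0; 0,1,0,1]

/-- The scattering matrix `R_{βα} = −(I⊗I − ξ_α b)⁻¹ (I⊗I − ξ_β b)`
(here `1` is the 4×4 identity `I⊗I`). -/
def R (β α : Fin 3) : Matrix (Fin 2 × Fin 2) (Fin 2 × Fin 2) KK :=
  -((1 - xi α • bmat)⁻¹ * (1 - xi β • bmat))

/-- `A ⊗ I` acting on the first two tensor factors of `(ℂ²)^{⊗3}`. -/
def legL (A : Matrix (Fin 2 × Fin 2) (Fin 2 × Fin 2) KK) :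
    Matrix (Fin 2 × Fin 2 × Fin 2) (Fin 2 × Fin 2 × Fin 2) KK :=
  Matrix.of fun p q => A (p.1, p.2.1) (q.1, q.2.1) * (if p.2.2 = q.2.2 then 1 else 0)

/-- `I ⊗ A` acting on the last two tensor factors of `(ℂ²)^{⊗3}`. -/
def legR (A : Matrix (Fin 2 × Fin 2) (Fin 2 × Fin 2) KK) :
    Matrix (Fin 2 × Fin 2 × Fin 2) (Fin 2 × Fin 2 × Fin 2) KK :=
  Matrix.of fun p q => (if p.1 = q.1 then 1 else 0) * A (p.2.1, p.2.2) (q.2.1, q.2.2)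

/-! ### Auxiliary lemmas -/

lemma bmat_apply (i j k l : Fin 2) :
    bmat (i, j) (k, l) = if i = j ∧ l = i then 1 else 0 := by
  fin_cases i <;> fin_cases j <;> fin_cases k <;> fin_cases l <;> rfl

lemma bmat_sq : bmat * bmat = bmat := by
  ext ⟨i, j⟩ ⟨k, l⟩
  simp [Matrix.mul_apply, Fintype.sum_prod_type, Fin.sum_univ_two, bmat_apply]
  fin_cases i <;> fin_cases j <;> fin_cases k <;> fin_cases l <;> simp

lemma u_sq : legL bmat * legL bmat = legL bmat := by
  ext ⟨a, b, c⟩ ⟨d, e, f⟩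
  simp [Matrix.mul_apply, Fintype.sum_prod_type, Fin.sum_univ_two, legL, bmat_apply]
  fin_cases a <;> fin_cases b <;> fin_cases c <;> fin_cases d <;> fin_cases e <;>
    fin_cases f <;> simp

lemma v_sq : legR bmat * legR bmat = legR bmat := by
  ext ⟨a, b, c⟩ ⟨d, e, f⟩
  simp [Matrix.mul_apply, Fintype.sum_prod_type, Fin.sum_univ_two, legR, bmat_apply]
  fin_cases a <;> fin_cases b <;> fin_cases c <;> fin_cases d <;> fin_cases e <;>
    fin_cases f <;> simp

lemma braid : legL bmat * legR bmat * legL bmat = legR bmat * legL bmat * legR bmat := by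
  ext ⟨a, b, c⟩ ⟨d, e, f⟩
  simp [Matrix.mul_apply, Fintype.sum_prod_type, Fin.sum_univ_two, legL, legR, bmat_apply]
  fin_cases a <;> fin_cases b <;> fin_cases c <;> fin_cases d <;> fin_cases e <;>
    fin_cases f <;> simp

lemma one_sub_xi_ne (i : Fin 3) : (1 : KK) - xi i ≠ 0 := by
  rw [sub_ne_zero]
  intro h
  have h2 : (1 : MvPolynomial (Fin 3) ℚ) = MvPolynomial.X i := by
    apply IsFractionRing.injective (MvPolynomial (Fin 3) ℚ) KK
    rw [_root_.map_one]; exact h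
  have := congrArg MvPolynomial.constantCoeff h2
  simp at this

lemma key_inv {S : Type*} [CommRing S] {n : Type*} [Fintype n] [DecidableEq n]
    (b : Matrix n n S) (hb : b * b = b) (x y : S) (hy : y = x + x * y) :
    (1 - x • b) * (1 + y • b) = 1 := by
  simp only [mul_add, sub_mul, mul_one, one_mul, smul_mul_assoc, mul_smul_comm,
    smul_smul, hb]
  match_scalars
  · ring
  · linear_combination hy

lemma key_R {S : Type*} [CommRing S] {n : Type*} [Fintype n] [DecidableEq n]
    (b : Matrix n n S) (hb : b * b = b) (y z c : S) (hc : c = y - z - y * z) :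
    -((1 + y • b) * (1 - z • b)) = -1 - c • b := by
  simp only [mul_sub, mul_one, one_mul, add_mul, smul_mul_assoc, mul_smul_comm,
    smul_smul, hb]
  rw [hc]
  match_scalars <;> ring

lemma key_ybe {S : Type*} [CommRing S] {n : Type*} [Fintype n] [DecidableEq n]
    (u v : Matrix n n S) (hu : u * u = u) (hv : v * v = v)
    (hbr : u * v * u = v * u * v) (p q r : S) (hs : q = p + r + p * r) :
    (-1 - p • u) * (-1 - q • v) * (-1 - r • u)
      = (-1 - r • v) * (-1 - q • u) * (-1 - p • v) := by
  have hbr' : u * (v * u) = v * (u * v) := by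
    rw [← mul_assoc, ← mul_assoc, hbr]
  simp only [sub_mul, mul_sub, neg_mul, mul_neg, one_mul, mul_one, neg_neg,
    smul_mul_assoc, mul_smul_comm, smul_smul, mul_assoc, hu, hv, hbr', hs]
  match_scalars <;> ring

lemma inv_eq (a : Fin 3) :
    (1 - xi a • bmat)⁻¹ = 1 + (xi a / (1 - xi a)) • bmat := by
  apply inv_eq_right_inv
  apply key_inv bmat bmat_sq
  have h := one_sub_xi_ne a
  field_simp
  ring

lemma R_eq (b a : Fin 3) :
    R b a = -1 - ((xi a - xi b) / (1 - xi a)) • bmat := by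
  rw [R, inv_eq]
  apply key_R bmat bmat_sq
  have h := one_sub_xi_ne a
  field_simp
  ring

lemma legL_aff (c : KK) : legL (-1 - c • bmat) = -1 - c • legL bmat := by
  ext ⟨a, b, e⟩ ⟨d, f, g⟩
  simp only [legL, Matrix.of_apply, Matrix.sub_apply, Matrix.neg_apply,
    Matrix.smul_apply, Matrix.one_apply, smul_eq_mul, Prod.mk.injEq]
  by_cases h1 : a = d <;> by_cases h2 : b = f <;> by_cases h3 : e = g <;>
    simp [h1, h2, h3]

lemma legR_aff (c : KK) : legR (-1 - c • bmat) = -1 - c • legR bmat := by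
  ext ⟨a, b, e⟩ ⟨d, f, g⟩
  simp only [legR, Matrix.of_apply, Matrix.sub_apply, Matrix.neg_apply,
    Matrix.smul_apply, Matrix.one_apply, smul_eq_mul, Prod.mk.injEq]
  by_cases h1 : a = d <;> by_cases h2 : b = f <;> by_cases h3 : e = g <;>
    simp [h1, h2, h3]

/-- The Yang–Baxter equation for this interaction matrix:
`(R_{γβ} ⊗ I)(I ⊗ R_{γα})(R_{βα} ⊗ I) = (I ⊗ R_{βα})(R_{γα} ⊗ I)(I ⊗ R_{γβ})`
with `α = 0`, `β = 1`, `γ = 2`. -/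
theorem yang_baxter_b11 :
    legL (R 2 1) * legR (R 2 0) * legL (R 1 0) =
      legR (R 1 0) * legL (R 2 0) * legR (R 2 1) := by
  simp only [R_eq, legL_aff, legR_aff]
  apply key_ybe _ _ u_sq v_sq braid
  have h0 := one_sub_xi_ne 0
  have h1 := one_sub_xi_ne 1
  field_simp
  ring

end
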